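/- arXiv:1811.08371 — 3 statements merged into one kernel-verified Lean document; each statement's English description precedes it below -/
import Mathlib

section
/- Let q be a prime and suppose h ≥ 0, l ≥ 0 are integers and m_1, …, m_l ≥ 2 are integers each dividing 5q, satisfying 2/5 = 2h − 2 + Σ_{i=1}^l (1 − 1/m_i), with q ≥ 7. Then h = 0, l = 3 and m_1 = m_2 = m_3 = 5. -/
/-!
Every branch index is a divisor `≠ 1` of `5q`, hence at least `5`. Writing
`δᵢ = 1/5 - 1/mᵢ ∈ [0, 1/5]`, the equation becomes `10h + 4l + 5 ∑ δᵢ = 12` with `0 ≤ 5 ∑ δᵢ ≤ l`,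
which forces `h = 0`, `l = 3` and all `δᵢ = 0`.
-/

theorem Nat.Prime.le_of_dvd_mul {p q m : ℕ} (hp : p.Prime) (hq : q.Prime) (hpq : p ≤ q)
    (hm : m ∣ p * q) (hm1 : m ≠ 1) : p ≤ m := by
  have hm0 : m ≠ 0 := by
    rintro rfl
    exact mul_ne_zero hp.ne_zero hq.ne_zero (zero_dvd_iff.1 hm)
  have hr := Nat.minFac_prime hm1
  have hrm : m.minFac ≤ m := Nat.minFac_le (Nat.pos_of_ne_zero hm0)
  rcases hr.dvd_mul.1 ((Nat.minFac_dvd m).trans hm) with hrp | hrq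
  · rwa [(Nat.prime_dvd_prime_iff_eq hr hp).1 hrp] at hrm
  · rw [(Nat.prime_dvd_prime_iff_eq hr hq).1 hrq] at hrm
    exact hpq.trans hrm

theorem eq_five_of_two_fifths_eq {ι : Type*} [Fintype ι] (h : ℕ) (m : ι → ℚ)
    (hm5 : ∀ i, 5 ≤ m i) (heq : (2 : ℚ) / 5 = 2 * h - 2 + ∑ i, (1 - 1 / m i)) :
    h = 0 ∧ Fintype.card ι = 3 ∧ ∀ i, m i = 5 := by
  set δ : ι → ℚ := fun i => 1 / 5 - 1 / m i
  have hδ_nonneg : ∀ i, 0 ≤ δ i := fun i =>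
    sub_nonneg.2 (one_div_le_one_div_of_le (by norm_num) (hm5 i))
  have hδ_le : ∀ i, δ i ≤ 1 / 5 := fun i =>
    sub_le_self _ (one_div_nonneg.2 (by linarith [hm5 i]))
  have hsum : ∑ i, (1 - 1 / m i) = 4 / 5 * Fintype.card ι + ∑ i, δ i := by
    simp only [δ, Finset.sum_sub_distrib, Finset.sum_const, Finset.card_univ, nsmul_eq_mul]
    ring
  have hD_nonneg : 0 ≤ ∑ i, δ i := Finset.sum_nonneg fun i _ => hδ_nonneg i
  have hD_le : ∑ i, δ i ≤ Fintype.card ι / 5 := by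
    simpa [div_eq_mul_one_div (Fintype.card ι : ℚ)] using
      Finset.sum_le_sum fun i (_ : i ∈ Finset.univ) => hδ_le i
  have hupper : 10 * h + 4 * Fintype.card ι ≤ 12 := by
    have : (10 * h + 4 * Fintype.card ι : ℚ) ≤ 12 := by linarith
    exact_mod_cast this
  have hlower : 12 ≤ 10 * h + 5 * Fintype.card ι := by
    have : (12 : ℚ) ≤ 10 * h + 5 * Fintype.card ι := by linarith
    exact_mod_cast this
  obtain ⟨rfl, hcard⟩ : h = 0 ∧ Fintype.card ι = 3 := by omega
  refine ⟨rfl, hcard, fun i => ?_⟩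
  have hδi : δ i = 0 :=
    (Finset.sum_eq_zero_iff_of_nonneg fun j _ => hδ_nonneg j).1
      (by rw [hcard] at hsum; push_cast at heq; linarith) i (Finset.mem_univ i)
  have hinv : (1 : ℚ) / 5 = 1 / m i := sub_eq_zero.1 hδi
  simpa [eq_comm] using hinv

/-- Riemann–Hurwitz constraint for a group of order 5q: the only solution of
2/5 = 2h − 2 + Σ (1 − 1/m_i), with each m_i ≥ 2 dividing 5q and q ≥ 7 prime,
is h = 0, l = 3 and m_1 = m_2 = m_3 = 5. -/
theorem stmt_2 {q : ℕ} (hq : q.Prime) (hq7 : 7 ≤ q)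
    (h l : ℕ) (m : Fin l → ℕ)
    (hm2 : ∀ i, 2 ≤ m i) (hmdvd : ∀ i, m i ∣ 5 * q)
    (heq : (2 : ℚ) / 5 = 2 * (h : ℚ) - 2 + ∑ i, (1 - 1 / (m i : ℚ))) :
    h = 0 ∧ l = 3 ∧ ∀ i, m i = 5 := by
  have hm5 : ∀ i, (5 : ℚ) ≤ m i := fun i => by
    exact_mod_cast Nat.prime_five.le_of_dvd_mul hq (by omega) (hmdvd i) (by grind)
  obtain ⟨hh, hl, hm⟩ := eq_five_of_two_fifths_eq h (fun i => (m i : ℚ)) hm5 heq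
  exact ⟨hh, by simpa using hl, fun i => by exact_mod_cast hm i⟩
end

section
/- Let q ≥ 7 be a prime with q ≡ 1 (mod 6), and let G = C_q ⋊ C_6 with C_6 acting faithfully (by x ↦ x^m, m of order 6 mod q). Then G is generated by the elements s := c³, a s, a b² and b, where b := c², and the product s · (as) · (ab²) · b equals the identity. -/
/-- Let q ≥ 7 be a prime with q ≡ 1 (mod 6) and G = C_q ⋊ C_6 with C_6 acting
faithfully on C_q. Setting b := c² and s := c³, the elements s, as, ab², b have
orders 2, 2, 3, 3 respectively, their product is 1, and they generate G
(realizing the (0; 2,2,3,3) action). -/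
theorem stmt_11 {q : ℕ} (hq : q.Prime) (hq7 : 7 ≤ q) (hq6 : q % 6 = 1)
    {G : Type} [Group G] (hcard : Nat.card G = 6 * q)
    (a c : G) (m : ℕ) (hm : orderOf ((m : ZMod q)) = 6)
    (ha : orderOf a = q) (hc : orderOf c = 6) (hcac : c * a * c⁻¹ = a ^ m)
    (hgen : Subgroup.closure {a, c} = ⊤) :
    orderOf (c ^ 3) = 2 ∧ orderOf (a * c ^ 3) = 2 ∧
    orderOf (a * (c ^ 2) ^ 2) = 3 ∧ orderOf (c ^ 2) = 3 ∧
    (c ^ 3) * (a * c ^ 3) * (a * (c ^ 2) ^ 2) * (c ^ 2) = 1 ∧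
    Subgroup.closure {c ^ 3, a * c ^ 3, a * (c ^ 2) ^ 2, c ^ 2} = ⊤ := by
  haveI : Fact q.Prime := ⟨hq⟩
  haveI : Fact (Nat.Prime 2) := ⟨Nat.prime_two⟩
  haveI : Fact (Nat.Prime 3) := ⟨Nat.prime_three⟩
  have h6 : (m : ZMod q) ^ 6 = 1 := by rw [← hm]; exact pow_orderOf_eq_one _
  have hm3 : (m : ZMod q) ^ 3 = -1 := by
    have hsq : ((m : ZMod q) ^ 3 - 1) * ((m : ZMod q) ^ 3 + 1) = 0 := by
      linear_combination h6
    rcases mul_eq_zero.mp hsq with h | h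
    · exfalso
      have h1 : (m : ZMod q) ^ 3 = 1 := by linear_combination h
      have := orderOf_dvd_of_pow_eq_one h1
      rw [hm] at this
      omega
    · linear_combination h
  have hm24 : (1 : ZMod q) + (m : ZMod q) ^ 2 + (m : ZMod q) ^ 4 = 0 := by
    have hy3 : ((m : ZMod q) ^ 2) ^ 3 = 1 := by rw [← pow_mul]; exact h6
    have hyne : (m : ZMod q) ^ 2 ≠ 1 := by
      intro h1
      have := orderOf_dvd_of_pow_eq_one h1
      rw [hm] at this
      omega
    have hfac : ((m : ZMod q) ^ 2 - 1) *
        (1 + (m : ZMod q) ^ 2 + ((m : ZMod q) ^ 2) ^ 2) = 0 := by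
      linear_combination hy3
    rcases mul_eq_zero.mp hfac with h | h
    · exact absurd (by linear_combination h) hyne
    · linear_combination h
  have hc6 : c ^ 6 = 1 := by rw [← hc]; exact pow_orderOf_eq_one _
  have hconj : ∀ k : ℕ, c ^ k * a * (c ^ k)⁻¹ = a ^ (m ^ k) := by
    intro k
    induction k with
    | zero => simp
    | succ n ih =>
      have h1 : c ^ (n + 1) * a * (c ^ (n + 1))⁻¹ = c * (c ^ n * a * (c ^ n)⁻¹) * c⁻¹ := by
        group
      have h2 : c * a ^ (m ^ n) * c⁻¹ = (c * a * c⁻¹) ^ (m ^ n) := (conj_pow ..).symm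
      rw [h1, ih, h2, hcac, ← pow_mul, mul_comm, ← pow_succ]
  have hapow : ∀ n : ℕ, ((n : ZMod q) = 0) → a ^ n = 1 := by
    intro n hn
    have : q ∣ n := (ZMod.natCast_eq_zero_iff n q).mp hn
    exact orderOf_dvd_iff_pow_eq_one.mp (ha ▸ this)
  -- order of c^3
  have hord3 : orderOf (c ^ 3) = 2 := by
    rw [orderOf_pow' c (by norm_num : (3:ℕ) ≠ 0), hc]
    norm_num
  have hordb : orderOf (c ^ 2) = 3 := by
    rw [orderOf_pow' c (by norm_num : (2:ℕ) ≠ 0), hc]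
    norm_num
  -- order of a * c^3
  have hsq2 : (a * c ^ 3) ^ 2 = 1 := by
    have he : (a * c ^ 3) ^ 2 = a * (c ^ 3 * a * (c ^ 3)⁻¹) * (c ^ 6) := by
      rw [pow_two]; group
    rw [he, hconj 3, hc6, mul_one,
      show a * a ^ (m ^ 3) = a ^ (1 + m ^ 3) by rw [pow_add, pow_one]]
    apply hapow
    push_cast
    rw [hm3]
    ring
  have hne2 : a * c ^ 3 ≠ 1 := by
    intro h
    have haeq : a = (c ^ 3)⁻¹ := eq_inv_of_mul_eq_one_left h
    have ha2 : a ^ 2 = 1 := by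
      rw [haeq]
      rw [show ((c ^ 3)⁻¹) ^ 2 = (c ^ 6)⁻¹ by group, hc6, inv_one]
    have := orderOf_dvd_of_pow_eq_one ha2
    rw [ha] at this
    have := Nat.le_of_dvd (by norm_num) this
    omega
  have hord2 : orderOf (a * c ^ 3) = 2 := orderOf_eq_prime hsq2 hne2
  -- order of a * (c^2)^2
  have hcb3 : (a * (c ^ 2) ^ 2) ^ 3 = 1 := by
    have he : (a * (c ^ 2) ^ 2) ^ 3 =
        a * (c ^ 4 * a * (c ^ 4)⁻¹) * (c ^ 8 * a * (c ^ 8)⁻¹) * c ^ 12 := by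
      rw [show (3:ℕ) = 2 + 1 from rfl, pow_succ, pow_two]; group
    have hc12 : c ^ 12 = 1 := by rw [show (12:ℕ) = 6 * 2 from rfl, pow_mul, hc6, one_pow]
    rw [he, hconj 4, hconj 8, hc12, mul_one,
      show a * a ^ (m ^ 4) * a ^ (m ^ 8) = a ^ (1 + m ^ 4 + m ^ 8) by
        rw [pow_add, pow_add, pow_one]]
    apply hapow
    push_cast
    linear_combination hm24 + (m : ZMod q) ^ 2 * h6
  have hne3 : a * (c ^ 2) ^ 2 ≠ 1 := by
    intro h
    have haeq : a = ((c ^ 2) ^ 2)⁻¹ := eq_inv_of_mul_eq_one_left h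
    have ha6 : a ^ 6 = 1 := by
      rw [haeq, show (((c ^ 2) ^ 2)⁻¹) ^ 6 = ((c ^ 6) ^ 4)⁻¹ by group, hc6, one_pow, inv_one]
    have := orderOf_dvd_of_pow_eq_one ha6
    rw [ha] at this
    have := Nat.le_of_dvd (by norm_num) this
    omega
  have hordab : orderOf (a * (c ^ 2) ^ 2) = 3 := orderOf_eq_prime hcb3 hne3
  -- the product
  have hprod : (c ^ 3) * (a * c ^ 3) * (a * (c ^ 2) ^ 2) * (c ^ 2) = 1 := by
    have he : (c ^ 3) * (a * c ^ 3) * (a * (c ^ 2) ^ 2) * (c ^ 2) =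
        (c ^ 3 * a * (c ^ 3)⁻¹) * (c ^ 6 * a * (c ^ 6)⁻¹) * c ^ 12 := by group
    have hc12 : c ^ 12 = 1 := by rw [show (12:ℕ) = 6 * 2 from rfl, pow_mul, hc6, one_pow]
    rw [he, hconj 3, hconj 6, hc12, mul_one, ← pow_add]
    apply hapow
    push_cast
    rw [hm3, h6]
    ring
  -- generation
  have hclos : Subgroup.closure {c ^ 3, a * c ^ 3, a * (c ^ 2) ^ 2, c ^ 2} = ⊤ := by
    set S : Set G := {c ^ 3, a * c ^ 3, a * (c ^ 2) ^ 2, c ^ 2} with hS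
    have h1 : c ^ 3 ∈ Subgroup.closure S := Subgroup.subset_closure (by simp [hS])
    have h2 : c ^ 2 ∈ Subgroup.closure S := Subgroup.subset_closure (by simp [hS])
    have h3 : a * c ^ 3 ∈ Subgroup.closure S := Subgroup.subset_closure (by simp [hS])
    have hcH : c ∈ Subgroup.closure S := by
      have := mul_mem h1 (inv_mem h2)
      rwa [show c ^ 3 * (c ^ 2)⁻¹ = c by group] at this
    have haH : a ∈ Subgroup.closure S := by
      have := mul_mem h3 (inv_mem h1)
      rwa [show (a * c ^ 3) * (c ^ 3)⁻¹ = a by group] at this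
    rw [eq_top_iff, ← hgen]
    apply (Subgroup.closure_le _).mpr
    intro x hx
    rcases hx with h | h
    · subst h; exact haH
    · rw [Set.mem_singleton_iff] at h; subst h; exact hcH
  exact ⟨hord3, hord2, hordab, hordb, hprod, hclos⟩
end

section
/- Let q ≥ 7 be a prime and suppose h ≥ 0, l ≥ 0 are integers and m_1, …, m_l ≥ 2 are integers each dividing 6q, satisfying 1/3 = 2h − 2 + Σ_{i=1}^l (1 − 1/m_i). Then either (h, and the multiset {m_i}) is (0; {2,2,3,3}), (0; {2,2,2,6}), (0; {3,6,6}), or q = 7 and it is (0; {2,7,42}). -/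
/-!
Since every `m i ≥ 2`, the sum `s = ∑ 1 / m i` lies in `[0, l / 2]`, while the equation says
`s = 2h + l - 7/3`; this forces `h = 0` and `l ∈ {3, 4}`. Writing `6q = m i * k i`, the equation
becomes the linear relation `∑ k i = (6l - 14) q` between divisors of `6q`, so a finite case check
over `{2, 3, 6, q, 2q, 3q, 6q}`, in which `q` enters only linearly, leaves the listed signatures.
For `l = 4`, the bound `k i ≤ 3q` forces every `k i ≥ q`, so only `m i ∈ {2, 3, 6}` survive.
-/

theorem sum_inv_le_card_div_two {ι : Type*} (s : Finset ι) {m : ι → ℕ}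
    (hm : ∀ i ∈ s, 2 ≤ m i) : ∑ i ∈ s, 1 / (m i : ℚ) ≤ s.card / 2 := by
  calc ∑ i ∈ s, 1 / (m i : ℚ) ≤ ∑ _i ∈ s, 1 / (2 : ℚ) :=
        Finset.sum_le_sum fun i hi => one_div_le_one_div_of_le two_pos (by exact_mod_cast hm i hi)
    _ = s.card / 2 := by simp [div_eq_mul_inv]

theorem genus_eq_zero_of_sum_eq_one_third {h l : ℕ} {m : Fin l → ℕ} (hm2 : ∀ i, 2 ≤ m i)
    (heq : (1 : ℚ) / 3 = 2 * h - 2 + ∑ i, (1 - 1 / (m i : ℚ))) :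
    h = 0 ∧ (l = 3 ∨ l = 4) ∧ ∑ i, 1 / (m i : ℚ) = l - 7 / 3 := by
  have hsplit : ∑ i, (1 - 1 / (m i : ℚ)) = l - ∑ i, 1 / (m i : ℚ) := by
    simp [Finset.sum_sub_distrib]
  have hnonneg : 0 ≤ ∑ i, 1 / (m i : ℚ) := by positivity
  have hle : ∑ i, 1 / (m i : ℚ) ≤ l / 2 := by
    simpa using sum_inv_le_card_div_two Finset.univ fun i _ => hm2 i
  have hupper : 12 * h + 3 * l ≤ 14 := by
    exact_mod_cast (by linarith : (12 * h + 3 * l : ℚ) ≤ 14)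
  have hlower : 14 ≤ 12 * h + 6 * l := by
    exact_mod_cast (by linarith : (14 : ℚ) ≤ 12 * h + 6 * l)
  obtain rfl : h = 0 := by omega
  exact ⟨rfl, by omega, by push_cast at heq; linarith⟩

theorem sum_codivisor_eq_mul_sum_inv {ι : Type*} (s : Finset ι) {N : ℕ} {m k : ι → ℕ}
    (hk : ∀ i, N = m i * k i) (hm : ∀ i, m i ≠ 0) :
    ∑ i ∈ s, (k i : ℚ) = N * ∑ i ∈ s, 1 / (m i : ℚ) := by
  rw [Finset.mul_sum]
  refine Finset.sum_congr rfl fun i _ => ?_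
  have : (m i : ℚ) ≠ 0 := by exact_mod_cast hm i
  rw [hk i]
  push_cast
  field_simp

theorem eq_of_six_mul_prime_eq_mul {q x a : ℕ} (hq : q.Prime) (h : 6 * q = x * a) (hx : 2 ≤ x) :
    x = 2 ∧ a = 3 * q ∨ x = 3 ∧ a = 2 * q ∨ x = 6 ∧ a = q ∨
      x = q ∧ a = 6 ∨ x = 2 * q ∧ a = 3 ∨ x = 3 * q ∧ a = 2 ∨ x = 6 * q ∧ a = 1 := by
  obtain ⟨d, e, hd, he, rfl⟩ := dvd_mul.1 (⟨a, h⟩ : x ∣ 6 * q)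
  have hd6 : d ∈ ({1, 2, 3, 6} : Finset ℕ) := by
    rw [show ({1, 2, 3, 6} : Finset ℕ) = Nat.divisors 6 by decide]
    exact Nat.mem_divisors.2 ⟨hd, by norm_num⟩
  simp only [Finset.mem_insert, Finset.mem_singleton] at hd6
  rcases (Nat.dvd_prime hq).1 he with rfl | rfl
  · rcases hd6 with rfl | rfl | rfl | rfl <;> omega
  · have hda : d * a = 6 := Nat.eq_of_mul_eq_mul_left hq.pos (by linarith)
    rcases hd6 with rfl | rfl | rfl | rfl <;> omega

theorem eq_of_six_mul_prime_eq_mul_of_le {q x a : ℕ} (hq : q.Prime) (hq7 : 7 ≤ q)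
    (h : 6 * q = x * a) (hx : 2 ≤ x) (ha : q ≤ a) :
    x = 2 ∧ a = 3 * q ∨ x = 3 ∧ a = 2 * q ∨ x = 6 ∧ a = q := by
  rcases eq_of_six_mul_prime_eq_mul hq h hx with h' | h' | h' | h' | h' | h' | h' <;> omega

theorem multiset_eq_of_codivisor_sum_eq_four_mul {q x y z a b c : ℕ} (hq : q.Prime)
    (hq7 : 7 ≤ q) (hx : 6 * q = x * a) (hy : 6 * q = y * b) (hz : 6 * q = z * c)
    (hx2 : 2 ≤ x) (hy2 : 2 ≤ y) (hz2 : 2 ≤ z) (hsum : a + b + c = 4 * q) :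
    ({x, y, z} : Multiset ℕ) = {3, 6, 6} ∨ (q = 7 ∧ ({x, y, z} : Multiset ℕ) = {2, 7, 42}) := by
  -- Primality matters here: `{2, q, q}`, `{2, q, 3q}`, `{2, q, 2q}` solve it for `q = 12, 8, 9`.
  have h2 : ¬ 2 ∣ q := fun hd => by
    have := (Nat.prime_dvd_prime_iff_eq Nat.prime_two hq).1 hd; omega
  have h3 : ¬ 3 ∣ q := fun hd => by
    have := (Nat.prime_dvd_prime_iff_eq Nat.prime_three hq).1 hd; omega
  rcases eq_of_six_mul_prime_eq_mul hq hx hx2 with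
    ⟨_, _⟩ | ⟨_, _⟩ | ⟨_, _⟩ | ⟨_, _⟩ | ⟨_, _⟩ | ⟨_, _⟩ | ⟨_, _⟩ <;>
  rcases eq_of_six_mul_prime_eq_mul hq hy hy2 with
    ⟨_, _⟩ | ⟨_, _⟩ | ⟨_, _⟩ | ⟨_, _⟩ | ⟨_, _⟩ | ⟨_, _⟩ | ⟨_, _⟩ <;>
  rcases eq_of_six_mul_prime_eq_mul hq hz hz2 with
    ⟨_, _⟩ | ⟨_, _⟩ | ⟨_, _⟩ | ⟨_, _⟩ | ⟨_, _⟩ | ⟨_, _⟩ | ⟨_, _⟩ <;>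
  subst x y z a b c <;>
  first
    | omega
    | exact Or.inl (by decide)
    | (obtain rfl : q = 7 := by omega
       exact Or.inr ⟨rfl, by decide⟩)

theorem multiset_eq_of_codivisor_sum_eq_ten_mul {q x y z w a b c d : ℕ} (hq : q.Prime)
    (hq7 : 7 ≤ q) (hx : 6 * q = x * a) (hy : 6 * q = y * b) (hz : 6 * q = z * c)
    (hw : 6 * q = w * d) (hx2 : 2 ≤ x) (hy2 : 2 ≤ y) (hz2 : 2 ≤ z) (hw2 : 2 ≤ w)
    (hsum : a + b + c + d = 10 * q) :
    ({x, y, z, w} : Multiset ℕ) = {2, 2, 3, 3} ∨ ({x, y, z, w} : Multiset ℕ) = {2, 2, 2, 6} := by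
  have ha := Nat.mul_le_mul_right a hx2
  have hb := Nat.mul_le_mul_right b hy2
  have hc := Nat.mul_le_mul_right c hz2
  have hd := Nat.mul_le_mul_right d hw2
  rcases eq_of_six_mul_prime_eq_mul_of_le hq hq7 hx hx2 (by omega) with
    ⟨_, _⟩ | ⟨_, _⟩ | ⟨_, _⟩ <;>
  rcases eq_of_six_mul_prime_eq_mul_of_le hq hq7 hy hy2 (by omega) with
    ⟨_, _⟩ | ⟨_, _⟩ | ⟨_, _⟩ <;>
  rcases eq_of_six_mul_prime_eq_mul_of_le hq hq7 hz hz2 (by omega) with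
    ⟨_, _⟩ | ⟨_, _⟩ | ⟨_, _⟩ <;>
  rcases eq_of_six_mul_prime_eq_mul_of_le hq hq7 hw hw2 (by omega) with
    ⟨_, _⟩ | ⟨_, _⟩ | ⟨_, _⟩ <;>
  subst x y z w a b c d <;>
  first
    | omega
    | exact Or.inl (by decide)
    | exact Or.inr (by decide)

/-- Riemann–Hurwitz constraint for a group of order 6q, q ≥ 7 prime: the
solutions of 1/3 = 2h − 2 + Σ (1 − 1/m_i) with each m_i ≥ 2 dividing 6q are
(0; 2,2,3,3), (0; 2,2,2,6), (0; 3,6,6), and for q = 7 also (0; 2,7,42). -/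
theorem stmt_19 {q : ℕ} (hq : q.Prime) (hq7 : 7 ≤ q)
    (h l : ℕ) (m : Fin l → ℕ)
    (hm2 : ∀ i, 2 ≤ m i) (hmdvd : ∀ i, m i ∣ 6 * q)
    (heq : (1 : ℚ) / 3 = 2 * (h : ℚ) - 2 + ∑ i, (1 - 1 / (m i : ℚ))) :
    h = 0 ∧
    (Multiset.map m Finset.univ.val = {2, 2, 3, 3} ∨
     Multiset.map m Finset.univ.val = {2, 2, 2, 6} ∨
     Multiset.map m Finset.univ.val = {3, 6, 6} ∨
     (q = 7 ∧ Multiset.map m Finset.univ.val = {2, 7, 42})) := by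
  obtain ⟨rfl, hl, hsum⟩ := genus_eq_zero_of_sum_eq_one_third hm2 heq
  choose k hk using hmdvd
  have hk_sum : ∑ i, k i + 14 * q = 6 * l * q := by
    have := sum_codivisor_eq_mul_sum_inv Finset.univ hk fun i => by have := hm2 i; omega
    rw [hsum] at this
    push_cast at this
    exact_mod_cast (by push_cast; linear_combination this :
      ((∑ i, k i + 14 * q : ℕ) : ℚ) = (6 * l * q : ℕ))
  refine ⟨rfl, ?_⟩
  rcases hl with rfl | rfl
  · rw [Fin.sum_univ_three] at hk_sum
    exact Or.inr <| Or.inr <| multiset_eq_of_codivisor_sum_eq_four_mul hq hq7 (hk 0) (hk 1)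
      (hk 2) (hm2 0) (hm2 1) (hm2 2) (by omega)
  · rw [Fin.sum_univ_four] at hk_sum
    exact (multiset_eq_of_codivisor_sum_eq_ten_mul hq hq7 (hk 0) (hk 1) (hk 2) (hk 3)
      (hm2 0) (hm2 1) (hm2 2) (hm2 3) (by omega)).imp_right Or.inl
end
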